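/- arXiv:1903.06230 — 3 statements merged into one kernel-verified Lean document; each statement's English description precedes it below -/
import Mathlib

section
/- Let f_d : R^{M_d} → R be convex and differentiable for d = 1,…,D, let f(p) = Σ_d f_d(B_d p), and suppose p⋆ satisfies ∇f(p⋆) = -Aᵀλ and Ap⋆ = 0. Then for each device d, the powers p_d⋆ = B_d p⋆ maximize the profit -λ_dᵀ p_d - f_d(p_d) over all p_d ∈ R^{M_d}, where λ_d = B_d Aᵀ λ. -/
open Matrix

/-!
Differentiating `f = Σ_d f_d ∘ B_d` in the direction `B_dᵀ u` kills every device but `d`, since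
`B_d' B_dᵀ = 0` for `d' ≠ d` and `B_d B_dᵀ = 1`; so `∇f_d(B_d p⋆) = B_d ∇f(p⋆) = -λ_d`. A convex
differentiable function lies above its tangent plane, so `p_d⋆` minimizes `f_d + λ_dᵀ(·)`, i.e.
maximizes the profit.
-/

lemma ContinuousLinearMap.apply_eq_dotProduct {ι : Type*} [Fintype ι] [DecidableEq ι]
    (L : (ι → ℝ) →L[ℝ] ℝ) (u : ι → ℝ) : L u = (fun i => L (Pi.single i 1)) ⬝ᵥ u := by
  conv_lhs => rw [pi_eq_sum_univ' u]
  simp [dotProduct, mul_comm]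

lemma ConvexOn.add_apply_sub_le_of_hasFDerivAt {E : Type*} [NormedAddCommGroup E]
    [NormedSpace ℝ E] {g : E → ℝ} {φ : E →L[ℝ] ℝ} {x : E} (hg : ConvexOn ℝ Set.univ g)
    (hφ : HasFDerivAt g φ x) (y : E) : g x + φ (y - x) ≤ g y := by
  have hconv : ConvexOn ℝ Set.univ (g ∘ AffineMap.lineMap (k := ℝ) x y) := by
    simpa using hg.comp_affineMap (AffineMap.lineMap x y)
  have hderiv : HasDerivAt (g ∘ AffineMap.lineMap (k := ℝ) x y) (φ (y - x)) 0 := by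
    rw [← AffineMap.lineMap_apply_zero x y (k := ℝ)] at hφ
    exact hφ.comp_hasDerivAt 0 AffineMap.hasDerivAt_lineMap
  have hslope := hconv.le_slope_of_hasDerivAt (Set.mem_univ 0) (Set.mem_univ 1) one_pos hderiv
  simp only [slope_def_field, Function.comp_apply, AffineMap.lineMap_apply_zero,
    AffineMap.lineMap_apply_one, sub_zero, div_one] at hslope
  linarith

lemma ConvexOn.isMaxOn_neg_dotProduct_sub {n : Type*} [Fintype n] {g : (n → ℝ) → ℝ}
    {x c : n → ℝ} (hg : ConvexOn ℝ Set.univ g) (hx : DifferentiableAt ℝ g x)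
    (hgrad : ∀ u, fderiv ℝ g x u = -(c ⬝ᵥ u)) :
    IsMaxOn (fun y => -(c ⬝ᵥ y) - g y) Set.univ x := by
  intro y _
  have htangent := hg.add_apply_sub_le_of_hasFDerivAt hx.hasFDerivAt y
  rw [hgrad, dotProduct_sub] at htangent
  simp only [Set.mem_ofPred_eq]
  linarith

section SumCompMulVec

variable {m D : ℕ} {Md : Fin D → ℕ} {B : ∀ d : Fin D, Matrix (Fin (Md d)) (Fin m) ℝ}
  {g : ∀ d : Fin D, (Fin (Md d) → ℝ) → ℝ} {p : Fin m → ℝ}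

lemma fderiv_sum_comp_mulVec_apply (hg : ∀ d, DifferentiableAt ℝ (g d) (B d *ᵥ p))
    (v : Fin m → ℝ) :
    fderiv ℝ (fun p => ∑ d, g d (B d *ᵥ p)) p v = ∑ d, fderiv ℝ (g d) (B d *ᵥ p) (B d *ᵥ v) := by
  have hcomp : ∀ d, HasFDerivAt (fun p => g d (B d *ᵥ p))
      ((fderiv ℝ (g d) (B d *ᵥ p)).comp (mulVecLin (B d)).toContinuousLinearMap) p :=
    fun d => (hg d).hasFDerivAt.comp p (mulVecLin (B d)).toContinuousLinearMap.hasFDerivAt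
  rw [(HasFDerivAt.fun_sum fun d _ => hcomp d).fderiv]
  simp

lemma fderiv_sum_comp_mulVec_transpose_mulVec (hself : ∀ d, B d * (B d)ᵀ = 1)
    (horth : ∀ d d', d ≠ d' → B d * (B d')ᵀ = 0)
    (hg : ∀ d, DifferentiableAt ℝ (g d) (B d *ᵥ p)) (d : Fin D) (u : Fin (Md d) → ℝ) :
    fderiv ℝ (fun p => ∑ d, g d (B d *ᵥ p)) p ((B d)ᵀ *ᵥ u) = fderiv ℝ (g d) (B d *ᵥ p) u := by
  rw [fderiv_sum_comp_mulVec_apply hg, Finset.sum_eq_single d]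
  · rw [mulVec_mulVec, hself, one_mulVec]
  · intro d' _ hd'
    rw [mulVec_mulVec, horth d' d hd', zero_mulVec, map_zero]
  · exact fun h => absurd (Finset.mem_univ d) h

end SumCompMulVec

theorem stmt_6_general (N M D : ℕ) (A : Matrix (Fin N) (Fin M) ℝ)
    (Md : Fin D → ℕ) (B : ∀ d : Fin D, Matrix (Fin (Md d)) (Fin M) ℝ)
    (hBself : ∀ d, B d * (B d).transpose = 1)
    (hBorth : ∀ d d', d ≠ d' → B d * (B d').transpose = 0)
    (fd : ∀ d : Fin D, (Fin (Md d) → ℝ) → ℝ)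
    (hconv : ∀ d, ConvexOn ℝ Set.univ (fd d))
    (hdiff : ∀ d, Differentiable ℝ (fd d))
    (f : (Fin M → ℝ) → ℝ) (hf : f = fun p => ∑ d : Fin D, fd d ((B d).mulVec p))
    (pstar : Fin M → ℝ) (lam : Fin N → ℝ)
    (hgrad : (fun i => fderiv ℝ f pstar (Pi.single i 1)) = -(A.transpose.mulVec lam)) :
    ∀ d : Fin D,
      IsMaxOn (fun pd : Fin (Md d) → ℝ =>
          -(((B d).mulVec (A.transpose.mulVec lam)) ⬝ᵥ pd) - fd d pd)
        Set.univ ((B d).mulVec pstar) := by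
  intro d
  refine (hconv d).isMaxOn_neg_dotProduct_sub (hdiff d _) fun u => ?_
  calc fderiv ℝ (fd d) (B d *ᵥ pstar) u
      = fderiv ℝ f pstar ((B d)ᵀ *ᵥ u) := by
        rw [hf, fderiv_sum_comp_mulVec_transpose_mulVec hBself hBorth (fun d => hdiff d _)]
    _ = -(Aᵀ *ᵥ lam) ⬝ᵥ ((B d)ᵀ *ᵥ u) := by
        rw [ContinuousLinearMap.apply_eq_dotProduct, hgrad]
    _ = -(B d *ᵥ (Aᵀ *ᵥ lam) ⬝ᵥ u) := by
        rw [neg_dotProduct, dotProduct_mulVec, vecMul_transpose]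

/-- Profit maximization principle: if `∇f(p⋆) = -Aᵀλ` and `A p⋆ = 0` for
`f(p) = Σ_d f_d(B_d p)` with each `f_d` convex and differentiable, and the selection
matrices `B_d` satisfy `B_d B_dᵀ = I`, `B_d B_{d'}ᵀ = 0` for `d ≠ d'`, then each device's
powers `p_d⋆ = B_d p⋆` maximize its profit `-λ_dᵀ p_d - f_d(p_d)` where `λ_d = B_d Aᵀ λ`. -/
theorem stmt_6 (N M D : ℕ) (A : Matrix (Fin N) (Fin M) ℝ)
    (Md : Fin D → ℕ) (B : ∀ d : Fin D, Matrix (Fin (Md d)) (Fin M) ℝ)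
    (hBself : ∀ d, B d * (B d).transpose = 1)
    (hBorth : ∀ d d', d ≠ d' → B d * (B d').transpose = 0)
    (fd : ∀ d : Fin D, (Fin (Md d) → ℝ) → ℝ)
    (hconv : ∀ d, ConvexOn ℝ Set.univ (fd d))
    (hdiff : ∀ d, Differentiable ℝ (fd d))
    (f : (Fin M → ℝ) → ℝ) (hf : f = fun p => ∑ d : Fin D, fd d ((B d).mulVec p))
    (pstar : Fin M → ℝ) (lam : Fin N → ℝ)
    (hgrad : (fun i => fderiv ℝ f pstar (Pi.single i 1)) = -(A.transpose.mulVec lam))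
    (hfeas : A.mulVec pstar = 0) :
    ∀ d : Fin D,
      IsMaxOn (fun pd : Fin (Md d) → ℝ =>
          -(((B d).mulVec (A.transpose.mulVec lam)) ⬝ᵥ pd) - fd d pd)
        Set.univ ((B d).mulVec pstar) :=
  stmt_6_general N M D A Md B hBself hBorth fd hconv hdiff f hf pstar lam hgrad
end

section
/- The set C = { (p₁,p₂) ∈ R² : α((p₁-p₂)/2)² ≤ p₁ + p₂ ≤ α p_max², |(p₁-p₂)/2| ≤ p_max } is convex, contains the set S = { (p₁,p₂) : p₁ + p₂ = α((p₁-p₂)/2)², |(p₁-p₂)/2| ≤ p_max }, and equals the convex hull of S (for α > 0, p_max > 0). -/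
/-- Convex relaxation of the lossy transmission line. -/
def lossyRelax (a pmax : ℝ) : Set (ℝ × ℝ) :=
  {x | a * ((x.1 - x.2) / 2) ^ 2 ≤ x.1 + x.2 ∧ x.1 + x.2 ≤ a * pmax ^ 2 ∧
       |(x.1 - x.2) / 2| ≤ pmax}

/-- Exact (nonconvex) feasible set of the lossy transmission line. -/
def lossyExact (a pmax : ℝ) : Set (ℝ × ℝ) :=
  {x | x.1 + x.2 = a * ((x.1 - x.2) / 2) ^ 2 ∧ |(x.1 - x.2) / 2| ≤ pmax}

lemma lossy_pt_mem (a pmax t : ℝ) (ht : |t| ≤ pmax) :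
    (a * t ^ 2 / 2 + t, a * t ^ 2 / 2 - t) ∈ lossyExact a pmax := by
  constructor
  · show a * t ^ 2 / 2 + t + (a * t ^ 2 / 2 - t) = _
    ring_nf
  · show |(a * t ^ 2 / 2 + t - (a * t ^ 2 / 2 - t)) / 2| ≤ pmax
    have h : (a * t ^ 2 / 2 + t - (a * t ^ 2 / 2 - t)) / 2 = t := by ring
    rwa [h]

lemma sq_convex_aux (a u v f1 f2 s1 s2 : ℝ) (ha : 0 ≤ a) (hu : 0 ≤ u) (hv : 0 ≤ v)
    (huv : u + v = 1) (h1 : a * f1 ^ 2 ≤ s1) (h2 : a * f2 ^ 2 ≤ s2) :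
    a * (u * f1 + v * f2) ^ 2 ≤ u * s1 + v * s2 := by
  have key : u * (a * f1 ^ 2) + v * (a * f2 ^ 2) - a * (u * f1 + v * f2) ^ 2
      = a * u * v * (f1 - f2) ^ 2 := by
    have hv' : v = 1 - u := by linarith
    subst hv'; ring
  nlinarith [mul_nonneg (mul_nonneg ha hu) hv, sq_nonneg (f1 - f2),
    mul_le_mul_of_nonneg_left h1 hu, mul_le_mul_of_nonneg_left h2 hv]

/-- The relaxation `C` is convex, contains the exact set `S`, and equals its convex hull. -/
theorem stmt_15 (a pmax : ℝ) (ha : 0 < a) (hpm : 0 < pmax) :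
    Convex ℝ (lossyRelax a pmax) ∧ lossyExact a pmax ⊆ lossyRelax a pmax ∧
      lossyRelax a pmax = convexHull ℝ (lossyExact a pmax) := by
  have hconv : Convex ℝ (lossyRelax a pmax) := by
    intro x hx y hy u v hu hv huv
    obtain ⟨hx1, hx2, hx3⟩ := hx
    obtain ⟨hy1, hy2, hy3⟩ := hy
    rw [abs_le] at hx3 hy3
    have e1 : (u • x + v • y).1 = u * x.1 + v * y.1 := rfl
    have e2 : (u • x + v • y).2 = u * x.2 + v * y.2 := rfl
    have hcomb : (u * x.1 + v * y.1 - (u * x.2 + v * y.2)) / 2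
        = u * ((x.1 - x.2) / 2) + v * ((y.1 - y.2) / 2) := by ring
    refine ⟨?_, ?_, ?_⟩
    · show a * (((u • x + v • y).1 - (u • x + v • y).2) / 2) ^ 2 ≤
        (u • x + v • y).1 + (u • x + v • y).2
      rw [e1, e2, hcomb]
      have := sq_convex_aux a u v ((x.1 - x.2) / 2) ((y.1 - y.2) / 2)
        (x.1 + x.2) (y.1 + y.2) ha.le hu hv huv hx1 hy1
      linarith
    · show (u • x + v • y).1 + (u • x + v • y).2 ≤ _
      rw [e1, e2]
      have h : (u + v) * (a * pmax ^ 2) = a * pmax ^ 2 := by rw [huv]; ring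
      nlinarith [mul_le_mul_of_nonneg_left hx2 hu, mul_le_mul_of_nonneg_left hy2 hv]
    · show |((u • x + v • y).1 - (u • x + v • y).2) / 2| ≤ pmax
      rw [e1, e2, hcomb, abs_le]
      constructor <;>
        nlinarith [mul_le_mul_of_nonneg_left hx3.2 hu, mul_le_mul_of_nonneg_left hy3.2 hv,
          mul_le_mul_of_nonneg_left hx3.1 hu, mul_le_mul_of_nonneg_left hy3.1 hv]
  have hsub : lossyExact a pmax ⊆ lossyRelax a pmax := by
    intro x hx
    obtain ⟨h1, h2⟩ := hx
    refine ⟨le_of_eq h1.symm, ?_, h2⟩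
    rw [h1]
    have h3 := abs_le.mp h2
    have h4 : ((x.1 - x.2) / 2) ^ 2 ≤ pmax ^ 2 := sq_le_sq' h3.1 h3.2
    exact mul_le_mul_of_nonneg_left h4 ha.le
  refine ⟨hconv, hsub, le_antisymm ?_ (convexHull_min hsub hconv)⟩
  intro x hx
  obtain ⟨h1, h2, h3⟩ := hx
  set f : ℝ := (x.1 - x.2) / 2 with hf
  set s : ℝ := x.1 + x.2 with hs
  have hfle : f ≤ pmax := (abs_le.mp h3).2
  rcases eq_or_lt_of_le hfle with heq | hlt
  · -- f = pmax forces s = a * pmax^2, so x ∈ S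
    apply subset_convexHull
    constructor
    · show s = a * f ^ 2
      rw [heq]; rw [heq] at h1; linarith
    · exact h3
  · -- f < pmax : chord construction
    have hpf : (0:ℝ) < pmax - f := by linarith
    have hD : (0:ℝ) < a * (pmax - f) := mul_pos ha hpf
    set t : ℝ := (a * pmax * f - s) / (a * (pmax - f)) with hft
    have htkey : t * (a * (pmax - f)) = a * pmax * f - s := div_mul_cancel₀ _ hD.ne'
    have htf : t ≤ f := by
      rw [hft, div_le_iff₀ hD]
      nlinarith [h1]
    have htm : -pmax ≤ t := by
      rw [hft, le_div_iff₀ hD]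
      nlinarith [h2]
    have hpt : (0:ℝ) < pmax - t := by linarith
    set lam : ℝ := (pmax - f) / (pmax - t) with hlam
    have hlamkey : lam * (pmax - t) = pmax - f := div_mul_cancel₀ _ hpt.ne'
    have hlam0 : 0 ≤ lam := le_of_lt (div_pos hpf hpt)
    have hlam1 : lam ≤ 1 := by
      rw [hlam, div_le_one hpt]; linarith
    have hA : (a * t ^ 2 / 2 + t, a * t ^ 2 / 2 - t) ∈ lossyExact a pmax :=
      lossy_pt_mem a pmax t (abs_le.mpr ⟨htm, le_trans htf hfle⟩)
    have hB : (a * pmax ^ 2 / 2 + pmax, a * pmax ^ 2 / 2 - pmax) ∈ lossyExact a pmax :=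
      lossy_pt_mem a pmax pmax (abs_le.mpr ⟨by linarith, le_refl _⟩)
    have hseg : x ∈ segment ℝ ((a * t ^ 2 / 2 + t, a * t ^ 2 / 2 - t) : ℝ × ℝ)
        ((a * pmax ^ 2 / 2 + pmax, a * pmax ^ 2 / 2 - pmax) : ℝ × ℝ) := by
      refine ⟨lam, 1 - lam, hlam0, by linarith, by ring, ?_⟩
      have hflow : lam * t + (1 - lam) * pmax = f := by linear_combination -hlamkey
      have h5 : lam * (a * (pmax ^ 2 - t ^ 2)) = a * (pmax - f) * (pmax + t) := by
        have h6 : lam * (a * (pmax ^ 2 - t ^ 2)) = (lam * (pmax - t)) * (a * (pmax + t)) := by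
          ring
        rw [h6, hlamkey]; ring
      have hsum : lam * (a * t ^ 2) + (1 - lam) * (a * pmax ^ 2) = s := by
        linear_combination (-1 : ℝ) * h5 + (-1 : ℝ) * htkey
      have hx1 : x.1 = s / 2 + f := by rw [hs, hf]; ring
      have hx2 : x.2 = s / 2 - f := by rw [hs, hf]; ring
      have hsmul : lam • ((a * t ^ 2 / 2 + t, a * t ^ 2 / 2 - t) : ℝ × ℝ) +
          (1 - lam) • ((a * pmax ^ 2 / 2 + pmax, a * pmax ^ 2 / 2 - pmax) : ℝ × ℝ) =
          (lam * (a * t ^ 2 / 2 + t) + (1 - lam) * (a * pmax ^ 2 / 2 + pmax),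
           lam * (a * t ^ 2 / 2 - t) + (1 - lam) * (a * pmax ^ 2 / 2 - pmax)) := rfl
      rw [hsmul]
      have e1 : lam * (a * t ^ 2 / 2 + t) + (1 - lam) * (a * pmax ^ 2 / 2 + pmax)
          = x.1 := by rw [hx1]; linear_combination hsum / 2 + hflow
      have e2 : lam * (a * t ^ 2 / 2 - t) + (1 - lam) * (a * pmax ^ 2 / 2 - pmax)
          = x.2 := by rw [hx2]; linear_combination hsum / 2 - hflow
      rw [e1, e2]
    exact segment_subset_convexHull hA hB hseg
end

section
/- If (λ₁, λ₂) with λ₁ + λ₂ > 0, and (p₁⋆, p₂⋆) minimizes λ₁ p₁ + λ₂ p₂ over the convex relaxation C = { (p₁,p₂) : α((p₁-p₂)/2)² ≤ p₁+p₂ ≤ α p_max², |(p₁-p₂)/2| ≤ p_max }, then p₁⋆ + p₂⋆ = α((p₁⋆-p₂⋆)/2)², i.e., the minimizer lies on the nonconvex lossy-line curve S and the relaxation is tight. -/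
/-- Exactness of the relaxation under positive total price: any minimizer of
`λ₁ p₁ + λ₂ p₂` over the relaxation satisfies `p₁ + p₂ = α((p₁-p₂)/2)²`,
i.e., it lies on the nonconvex lossy-line curve. -/
theorem stmt_16 (a pmax lam1 lam2 : ℝ) (ha : 0 < a) (hpm : 0 < pmax)
    (hl : 0 < lam1 + lam2) (x : ℝ × ℝ) (hx : x ∈ lossyRelax a pmax)
    (hmin : IsMinOn (fun y : ℝ × ℝ => lam1 * y.1 + lam2 * y.2) (lossyRelax a pmax) x) :
    x.1 + x.2 = a * ((x.1 - x.2) / 2) ^ 2 := by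
  obtain ⟨h1, h2, h3⟩ := hx
  by_contra hne
  have hlt : a * ((x.1 - x.2) / 2) ^ 2 < x.1 + x.2 := lt_of_le_of_ne h1 (Ne.symm hne)
  set ε := (x.1 + x.2 - a * ((x.1 - x.2) / 2) ^ 2) / 2 with hε
  have hεpos : 0 < ε := by rw [hε]; linarith
  have hy : (x.1 - ε, x.2 - ε) ∈ lossyRelax a pmax := by
    refine ⟨?_, ?_, ?_⟩
    · simp only
      have : (x.1 - ε - (x.2 - ε)) / 2 = (x.1 - x.2) / 2 := by ring
      rw [this]
      nlinarith
    · simp only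
      nlinarith
    · simp only
      have : (x.1 - ε - (x.2 - ε)) / 2 = (x.1 - x.2) / 2 := by ring
      rw [this]; exact h3
  have := hmin hy
  simp only [Set.mem_setOf_eq] at this
  nlinarith
end
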